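/- arXiv:1509.02487 — 4 statements merged into one kernel-verified Lean document; each statement's English description precedes it below -/
import Mathlib

section
/- Let S : ℕ → Finset (Fin n) be a deterministic schedule, let i be a node, let t ≥ 1, and let n_i = |{t' : 1 ≤ t' ≤ t, i ∈ S t'}| be the number of times node i is probed up to time t. Then ∑_{t'=1}^{t} τ_i^S(t') ≥ t² / (2·(n_i + 1)). -/
/-!
Write `τ = tauC n S i` and let `P` be the set of probe times of `i` in `[1, t]` together with `0`,
so `|P| ≤ m := n_i + 1`. A time `t'` is determined by the pair `(τ t', t' - τ t')`, whose second
entry is the last probe before `t'` and lies in `P`; hence at most `k m` times have `τ ≤ k`, and at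
least `t - k m` have `τ > k`. Since `∑ τ = ∑_k #{τ > k}`, summing over `k ≤ t / m` bounds `∑ τ`
below by an arithmetic progression whose sum is at least `t² / (2m)`.
-/

open Finset

/-- Waiting time of node `i` at time `t` under deterministic schedule `S`:
`t - t₀` where `t₀` is the largest time `t' < t` with `i ∈ S t'`, and `t` if
`i` is never probed before `t` (the `Finset.sup` of the empty set is `0`). -/
def tauC (n : ℕ) (S : ℕ → Finset (Fin n)) (i : Fin n) (t : ℕ) : ℕ :=
  t - ((Finset.range t).filter (fun t' => i ∈ S t')).sup id

lemma Finset.sup_id_mem_insert_bot {α : Type*} [LinearOrder α] [OrderBot α] (s : Finset α) :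
    s.sup id ∈ insert ⊥ s := by
  rcases s.eq_empty_or_nonempty with rfl | hs
  · simp
  · exact mem_insert_of_mem (by simpa using sup_mem_of_nonempty (f := id) hs)

lemma Finset.sum_range_card_filter_lt_le_sum {ι : Type*} (s : Finset ι) (f : ι → ℕ) (K : ℕ) :
    ∑ k ∈ range K, #{x ∈ s | k < f x} ≤ ∑ x ∈ s, f x := by
  simp_rw [card_filter]
  rw [sum_comm]
  refine sum_le_sum fun x _ => ?_
  rw [← card_filter]
  calc #{k ∈ range K | k < f x} ≤ #(range (f x)) :=
        card_le_card fun k hk => mem_range.2 (mem_filter.1 hk).2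
    _ = f x := card_range _

lemma sum_range_sub_mul (K : ℕ) (a b : ℝ) :
    ∑ k ∈ range K, (a - k * b) = K * a - b * K * (K - 1) / 2 := by
  induction K with
  | zero => simp
  | succ K ih => rw [sum_range_succ, ih]; push_cast; ring

lemma sq_card_div_le_sum {ι : Type*} (s : Finset ι) (f : ι → ℕ) {m : ℕ} (hm : 0 < m)
    (h : ∀ k, #{x ∈ s | f x ≤ k} ≤ k * m) :
    (#s : ℝ) ^ 2 / (2 * m) ≤ ∑ x ∈ s, (f x : ℝ) := by
  set N := #s
  set q := N / m
  have htail : ∀ k : ℕ, (N : ℝ) - k * m ≤ #{x ∈ s | k < f x} := by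
    intro k
    have hsplit := card_filter_add_card_filter_not (s := s) (p := fun x => f x ≤ k)
    simp only [not_le] at hsplit
    have hle : (#{x ∈ s | f x ≤ k} : ℝ) ≤ k * m := by exact_mod_cast h k
    have hsplit' : (#{x ∈ s | f x ≤ k} : ℝ) + #{x ∈ s | k < f x} = N := by exact_mod_cast hsplit
    linarith
  have hlower : ((q : ℝ) + 1) * N - m * (q + 1) * q / 2 ≤ ∑ x ∈ s, (f x : ℝ) :=
    calc ((q : ℝ) + 1) * N - m * (q + 1) * q / 2
        = ∑ k ∈ range (q + 1), ((N : ℝ) - k * m) := by rw [sum_range_sub_mul]; push_cast; ring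
      _ ≤ ∑ k ∈ range (q + 1), (#{x ∈ s | k < f x} : ℝ) := sum_le_sum fun k _ => htail k
      _ ≤ ∑ x ∈ s, (f x : ℝ) := by exact_mod_cast sum_range_card_filter_lt_le_sum s f (q + 1)
  have hqN : (m * q : ℝ) ≤ N := by exact_mod_cast Nat.mul_div_le N m
  have hNq : (N : ℝ) < m * (q + 1) := by exact_mod_cast Nat.lt_mul_div_succ N hm
  have hm' : (0 : ℝ) < m := by exact_mod_cast hm
  rw [div_le_iff₀ (by positivity)]
  -- `2m · (lower bound) - N² = m²(q + 1) - (m(q + 1) - N)²` and `0 < m(q + 1) - N ≤ m`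
  nlinarith [mul_nonneg hm'.le (Nat.cast_nonneg q : (0 : ℝ) ≤ q)]

section

variable {n : ℕ} (S : ℕ → Finset (Fin n)) (i : Fin n)

def lastProbe (t : ℕ) : ℕ := {t' ∈ range t | i ∈ S t'}.sup id

lemma tauC_eq (t : ℕ) : tauC n S i t = t - lastProbe S i t := rfl

lemma lastProbe_lt {t : ℕ} (ht : 0 < t) : lastProbe S i t < t :=
  (Finset.sup_lt_iff ht).2 fun _ hb => mem_range.1 (mem_filter.1 hb).1

lemma lastProbe_mem {t T : ℕ} (htT : t ≤ T) :
    lastProbe S i t ∈ insert 0 {t' ∈ Icc 1 T | i ∈ S t'} := by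
  have hmem : lastProbe S i t ∈ insert 0 {t' ∈ range t | i ∈ S t'} :=
    sup_id_mem_insert_bot _
  simp only [mem_insert, mem_filter, mem_range, mem_Icc] at hmem ⊢
  rcases hmem with h0 | ⟨hlt, hprobe⟩
  · exact Or.inl h0
  · rcases Nat.eq_zero_or_pos (lastProbe S i t) with h0 | hpos
    · exact Or.inl h0
    · exact Or.inr ⟨⟨hpos, by omega⟩, hprobe⟩

lemma card_filter_tauC_le (T k : ℕ) :
    #{t ∈ Icc 1 T | tauC n S i t ≤ k} ≤ k * (#{t ∈ Icc 1 T | i ∈ S t} + 1) := by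
  calc #{t ∈ Icc 1 T | tauC n S i t ≤ k}
      ≤ #(Icc 1 k ×ˢ insert 0 {t' ∈ Icc 1 T | i ∈ S t'}) := by
        refine card_le_card_of_injOn (fun t => (tauC n S i t, lastProbe S i t)) ?_ ?_
        · intro t ht
          simp only [coe_filter, mem_Icc, Set.mem_ofPred_eq] at ht
          have hlt := lastProbe_lt S i (t := t) (by omega)
          simp only [coe_product, Set.mem_prod, mem_coe, mem_Icc, tauC_eq]
          exact ⟨⟨by omega, ht.2⟩, lastProbe_mem S i ht.1.2⟩
        · intro a ha b hb hab
          simp only [coe_filter, mem_Icc, Set.mem_ofPred_eq] at ha hb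
          simp only [Prod.mk.injEq, tauC_eq] at hab
          have := lastProbe_lt S i (t := a) (by omega)
          have := lastProbe_lt S i (t := b) (by omega)
          omega
    _ ≤ k * (#{t ∈ Icc 1 T | i ∈ S t} + 1) := by
        rw [card_product, Nat.card_Icc, Nat.add_sub_cancel]
        exact Nat.mul_le_mul_left k (card_insert_le _ _)

end

theorem stmt_2_general (n : ℕ) (S : ℕ → Finset (Fin n)) (i : Fin n) (t : ℕ)
    (ni : ℕ) (hni : ni = ((Finset.Icc 1 t).filter (fun t' => i ∈ S t')).card) :
    (t : ℝ) ^ 2 / (2 * ((ni : ℝ) + 1)) ≤ ∑ t' ∈ Finset.Icc 1 t, (tauC n S i t' : ℝ) := by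
  subst hni
  have h := sq_card_div_le_sum (Icc 1 t) (tauC n S i) (Nat.succ_pos _) (card_filter_tauC_le S i t)
  rwa [Nat.card_Icc, Nat.add_sub_cancel, Nat.cast_succ] at h

theorem stmt_2 (n : ℕ) (S : ℕ → Finset (Fin n)) (i : Fin n) (t : ℕ) (ht : 1 ≤ t)
    (ni : ℕ) (hni : ni = ((Finset.Icc 1 t).filter (fun t' => i ∈ S t')).card) :
    (t : ℝ) ^ 2 / (2 * ((ni : ℝ) + 1)) ≤ ∑ t' ∈ Finset.Icc 1 t, (tauC n S i t' : ℝ) :=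
  stmt_2_general n S i t ni hni
end

section
/- Let n ≥ 1 and let r : Fin n → ℕ satisfy ∑_{i} (1/2)^{r i} ≤ 1 (as real numbers). Then there exists a : Fin n → ℕ with a i < 2^{r i} for every i, such that for all i ≠ j the arithmetic progressions {a i + k·2^{r i} : k ∈ ℕ} and {a j + k·2^{r j} : k ∈ ℕ} are disjoint. Consequently the assignment 'probe node i at the times a i + k·2^{r i}' defines a 2^{max_i r i}-cyclic deterministic 1-schedule in which node i is probed exactly every 2^{r i} steps. -/
/-!
Place the nodes greedily in order of increasing `r`. When node `x` is placed, an earlier node `y`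
(so `r y ≤ r x`) rules out `2 ^ (r x - r y)` residues modulo `2 ^ r x`, hence at most
`2 ^ r x * ∑ (1 / 2) ^ r y < 2 ^ r x` residues are ruled out and a free one remains.
Two progressions `a i + 2 ^ r i * ℕ` and `a j + 2 ^ r j * ℕ` can only meet if
`a i ≡ a j [MOD 2 ^ min (r i) (r j)]`, which the greedy choice excludes.
-/

open Finset

lemma card_filter_range_modEq_of_dvd {d N : ℕ} (hd : d ∣ N) (c : ℕ) :
    #{y ∈ range N | y ≡ c [MOD d]} = N / d := by
  rcases Nat.eq_zero_or_pos d with rfl | hd_pos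
  · simp [Nat.eq_zero_of_zero_dvd hd]
  · simp [← Nat.count_eq_card_filter_range, Nat.count_modEq_card N hd_pos,
      Nat.mod_eq_zero_of_dvd hd]

lemma exists_lt_forall_not_modEq {ι : Type*} (s : Finset ι) (d c : ι → ℕ) {N : ℕ}
    (hd : ∀ i ∈ s, d i ∣ N) (hsum : ∑ i ∈ s, N / d i < N) :
    ∃ y < N, ∀ i ∈ s, ¬ y ≡ c i [MOD d i] := by
  classical
  by_contra! hcover
  have hsub : range N ⊆ s.biUnion fun i => {y ∈ range N | y ≡ c i [MOD d i]} := by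
    intro y hy
    obtain ⟨i, hi, hyi⟩ := hcover y (mem_range.1 hy)
    exact mem_biUnion.2 ⟨i, hi, mem_filter.2 ⟨hy, hyi⟩⟩
  have := (card_le_card hsub).trans card_biUnion_le
  rw [card_range, sum_congr rfl fun i hi => card_filter_range_modEq_of_dvd (hd i hi) (c i)] at this
  omega

lemma modEq_of_add_mul_eq_add_mul {a b k l p q d : ℕ} (hp : d ∣ p) (hq : d ∣ q)
    (h : a + k * p = b + l * q) : a ≡ b [MOD d] := by
  have hkp : k * p ≡ 0 [MOD d] := Nat.modEq_zero_iff_dvd.2 (dvd_mul_of_dvd_right hp k)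
  have hlq : l * q ≡ 0 [MOD d] := Nat.modEq_zero_iff_dvd.2 (dvd_mul_of_dvd_right hq l)
  simpa using (hkp.add_left a).symm.trans (h ▸ hlq.add_left b)

lemma cast_two_pow_div_two_pow {m k : ℕ} (h : k ≤ m) :
    ((2 ^ m / 2 ^ k : ℕ) : ℝ) = 2 ^ m * (1 / 2) ^ k := by
  rw [Nat.cast_div (pow_dvd_pow 2 h) (by positivity)]
  push_cast
  rw [one_div_pow, mul_one_div]

theorem exists_dyadic_residues_incongruent {ι : Type*} [DecidableEq ι] (r : ι → ℕ)
    (s : Finset ι) (hs : ∑ i ∈ s, ((1 : ℝ) / 2) ^ r i ≤ 1) :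
    ∃ a : ι → ℕ, (∀ i, a i < 2 ^ r i) ∧
      ∀ i ∈ s, ∀ j ∈ s, i ≠ j → ¬ a i ≡ a j [MOD 2 ^ min (r i) (r j)] := by
  induction s using Finset.induction_on_max_value r with
  | empty => exact ⟨0, fun i => Nat.two_pow_pos _, by simp⟩
  | insert x s hx hmax ih =>
    rw [sum_insert hx] at hs
    have hrest : ∑ i ∈ s, ((1 : ℝ) / 2) ^ r i ≤ 1 - (1 / 2) ^ r x := by linarith
    obtain ⟨a, ha_lt, ha⟩ :=
      ih (hrest.trans (by linarith [pow_pos (one_half_pos (α := ℝ)) (r x)]))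
    have hfree : ∑ i ∈ s, 2 ^ r x / 2 ^ r i < 2 ^ r x := by
      have : ((∑ i ∈ s, 2 ^ r x / 2 ^ r i : ℕ) : ℝ) ≤ 2 ^ r x - 1 := by
        rw [Nat.cast_sum, sum_congr rfl fun i hi => cast_two_pow_div_two_pow (hmax i hi),
          ← mul_sum]
        calc (2 : ℝ) ^ r x * ∑ i ∈ s, (1 / 2) ^ r i ≤ 2 ^ r x * (1 - (1 / 2) ^ r x) := by
              gcongr
          _ = 2 ^ r x - 1 := by rw [mul_sub, mul_one, ← mul_pow]; norm_num
      exact Nat.cast_lt.1 (this.trans_lt (by push_cast; linarith))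
    obtain ⟨y, hy_lt, hy⟩ := exists_lt_forall_not_modEq s (fun i => 2 ^ r i) a
      (fun i hi => pow_dvd_pow 2 (hmax i hi)) hfree
    have hxy : ∀ j ∈ s, ¬ y ≡ a j [MOD 2 ^ min (r x) (r j)] := fun j hj => by
      rw [min_eq_right (hmax j hj)]
      exact hy j hj
    refine ⟨Function.update a x y, fun i => ?_, ?_⟩
    · rcases eq_or_ne i x with rfl | hix
      · simpa using hy_lt
      · simpa [hix] using ha_lt i
    · intro i hi j hj hij
      have hne : ∀ k ∈ s, k ≠ x := fun k hk hkx => hx (hkx ▸ hk)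
      rcases mem_insert.1 hi with hix | hi <;> rcases mem_insert.1 hj with hjx | hj
      · exact absurd (hix.trans hjx.symm) hij
      · subst i; simpa [hne j hj] using hxy j hj
      · subst j; simpa [hne i hi, min_comm] using fun h => hxy i hi h.symm
      · simpa [hne i hi, hne j hj] using ha i hi j hj hij

lemma mod_eq_iff_exists_eq_add_mul {t a p : ℕ} (ha : a < p) :
    t % p = a ↔ ∃ k, t = a + k * p := by
  constructor
  · rintro rfl
    exact ⟨t / p, by rw [mul_comm]; exact (Nat.mod_add_div t p).symm⟩
  · rintro ⟨k, rfl⟩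
    rw [Nat.add_mul_mod_self_right, Nat.mod_eq_of_lt ha]

theorem exists_periodic_schedule {ι : Type*} [Fintype ι] [DecidableEq ι] (p a : ι → ℕ)
    (ha : ∀ i, a i < p i) (hdisj : ∀ i j, i ≠ j → ∀ k l, a i + k * p i ≠ a j + l * p j)
    {P : ℕ} (hP : ∀ i, p i ∣ P) :
    ∃ S : ℕ → Finset ι, (∀ t, #(S t) ≤ 1) ∧
      (∀ i t, i ∈ S t ↔ ∃ k, t = a i + k * p i) ∧ ∀ t, S (t + P) = S t := by
  have hmem : ∀ i t, i ∈ ({i | t % p i = a i} : Finset ι) ↔ ∃ k, t = a i + k * p i := by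
    intro i t
    rw [mem_filter_univ, mod_eq_iff_exists_eq_add_mul (ha i)]
  refine ⟨fun t => {i | t % p i = a i}, fun t => ?_, hmem, fun t => ?_⟩
  · refine card_le_one.2 fun i hi j hj => by_contra fun hij => ?_
    obtain ⟨k, hk⟩ := (hmem i t).1 hi
    obtain ⟨l, hl⟩ := (hmem j t).1 hj
    exact hdisj i j hij k l (hk ▸ hl)
  · ext i
    obtain ⟨m, hm⟩ := hP i
    rw [mem_filter_univ, mem_filter_univ, hm, Nat.add_mul_mod_self_left]

theorem stmt_3_general (n : ℕ) (r : Fin n → ℕ)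
    (hr : ∑ i, ((1 : ℝ) / 2) ^ (r i) ≤ 1) :
    ∃ a : Fin n → ℕ,
      (∀ i, a i < 2 ^ (r i)) ∧
      (∀ i j : Fin n, i ≠ j →
        ∀ k l : ℕ, a i + k * 2 ^ (r i) ≠ a j + l * 2 ^ (r j)) ∧
      -- consequently, probing node `i` exactly at the times `a i + k * 2 ^ (r i)`
      -- is a deterministic 1-schedule (at most one probe per step) which probes
      -- node `i` exactly every `2 ^ (r i)` steps and which is
      -- `2 ^ (max_i r i)`-cyclic:
      ∃ S : ℕ → Finset (Fin n),
        (∀ t, (S t).card ≤ 1) ∧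
        (∀ (i : Fin n) (t : ℕ), i ∈ S t ↔ ∃ k : ℕ, t = a i + k * 2 ^ (r i)) ∧
        (∀ t : ℕ, 2 ^ (Finset.univ.sup r) ≤ t →
          S (t + 2 ^ (Finset.univ.sup r)) = S t) := by
  obtain ⟨a, ha_lt, ha⟩ := exists_dyadic_residues_incongruent r univ hr
  have hdisj : ∀ i j, i ≠ j → ∀ k l, a i + k * 2 ^ r i ≠ a j + l * 2 ^ r j :=
    fun i j hij k l h => ha i (mem_univ i) j (mem_univ j) hij <|
      modEq_of_add_mul_eq_add_mul (pow_dvd_pow 2 (min_le_left _ _))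
        (pow_dvd_pow 2 (min_le_right _ _)) h
  obtain ⟨S, hcard, hmem, hper⟩ := exists_periodic_schedule (fun i => 2 ^ r i) a ha_lt hdisj
    (P := 2 ^ univ.sup r) fun i => pow_dvd_pow 2 (le_sup (mem_univ i))
  exact ⟨a, ha_lt, hdisj, S, hcard, hmem, fun t _ => hper t⟩

theorem stmt_3 (n : ℕ) (hn : 1 ≤ n) (r : Fin n → ℕ)
    (hr : ∑ i, ((1 : ℝ) / 2) ^ (r i) ≤ 1) :
    ∃ a : Fin n → ℕ,
      (∀ i, a i < 2 ^ (r i)) ∧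
      (∀ i j : Fin n, i ≠ j →
        ∀ k l : ℕ, a i + k * 2 ^ (r i) ≠ a j + l * 2 ^ (r j)) ∧
      -- consequently, probing node `i` exactly at the times `a i + k * 2 ^ (r i)`
      -- is a deterministic 1-schedule (at most one probe per step) which probes
      -- node `i` exactly every `2 ^ (r i)` steps and which is
      -- `2 ^ (max_i r i)`-cyclic:
      ∃ S : ℕ → Finset (Fin n),
        (∀ t, (S t).card ≤ 1) ∧
        (∀ (i : Fin n) (t : ℕ), i ∈ S t ↔ ∃ k : ℕ, t = a i + k * 2 ^ (r i)) ∧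
        (∀ t : ℕ, 2 ^ (Finset.univ.sup r) ≤ t →
          S (t + 2 ^ (Finset.univ.sup r)) = S t) :=
  stmt_3_general n r hr
end

section
/- Let n ≥ 1, c ≥ 1, and let π : Fin n → ℝ satisfy π i > 0 for all i. Then there exists a deterministic c-schedule S : ℕ → Finset (Fin n) with (S t).card ≤ c for all t, such that limsup_{t→∞} (1/t) · ∑_{t'=1}^{t} ∑_{i} π i · τ_i^S(t') ≤ (3 + (c-1)/c) · max(∑_{i} π i, (1/(2c)) · (∑_{i} √(π i))²). -/
open Finset

theorem exists_subset_sum_eq_two_pow {ι : Type*} [DecidableEq ι] (B : ℕ) (s : Finset ι)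
    (w : ι → ℕ) (hdvd : ∀ i ∈ s, w i ∣ 2 ^ B) (hsum : 2 ^ B ≤ ∑ i ∈ s, w i) :
    ∃ A ⊆ s, ∑ i ∈ A, w i = 2 ^ B := by
  induction B generalizing s with
  | zero =>
    obtain ⟨i, hi⟩ : s.Nonempty := nonempty_of_sum_ne_zero
      (by rw [pow_zero] at hsum; omega : ∑ i ∈ s, w i ≠ 0)
    exact ⟨{i}, singleton_subset_iff.2 hi, by simpa using hdvd i hi⟩
  | succ B ih =>
    by_cases hbig : ∃ i ∈ s, w i = 2 ^ (B + 1)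
    · obtain ⟨i, hi, hwi⟩ := hbig
      exact ⟨{i}, singleton_subset_iff.2 hi, by simpa using hwi⟩
    push Not at hbig
    have hdvd' : ∀ i ∈ s, w i ∣ 2 ^ B := fun i hi => by
      obtain ⟨k, hk, hwk⟩ := (Nat.dvd_prime_pow Nat.prime_two).1 (hdvd i hi)
      have : k ≠ B + 1 := fun h => hbig i hi (by rw [hwk, h])
      exact hwk ▸ pow_dvd_pow 2 (by omega)
    have hpow : 2 ^ (B + 1) = 2 ^ B + 2 ^ B := by ring
    obtain ⟨A₁, hA₁s, hA₁⟩ := ih s hdvd' (by omega)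
    have hrest : ∑ i ∈ s \ A₁, w i + ∑ i ∈ A₁, w i = ∑ i ∈ s, w i := sum_sdiff hA₁s
    obtain ⟨A₂, hA₂s, hA₂⟩ := ih (s \ A₁) (fun i hi => hdvd' i (mem_sdiff.1 hi).1) (by omega)
    refine ⟨A₁ ∪ A₂, union_subset hA₁s (hA₂s.trans sdiff_subset), ?_⟩
    rw [sum_union (disjoint_left.2 fun i hi₁ hi₂ => (mem_sdiff.1 (hA₂s hi₂)).2 hi₁), hA₁, hA₂,
      hpow]

theorem exists_coloring_sum_le_two_pow {ι : Type*} [DecidableEq ι] (c B : ℕ) (s : Finset ι)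
    (w : ι → ℕ) (hdvd : ∀ i ∈ s, w i ∣ 2 ^ B) (hsum : ∑ i ∈ s, w i ≤ c * 2 ^ B) :
    ∃ f : ι → ℕ, (∀ i ∈ s, f i < c) ∧ ∀ k, ∑ i ∈ s.filter (f · = k), w i ≤ 2 ^ B := by
  induction c generalizing s with
  | zero =>
    have hs : s = ∅ := eq_empty_of_forall_notMem fun i hi =>
      (Nat.pos_of_dvd_of_pos (hdvd i hi) (Nat.two_pow_pos B)).ne'
        (sum_eq_zero_iff.1 (by simpa using hsum) i hi)
    exact ⟨0, by simp [hs], by simp [hs]⟩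
  | succ c ih =>
    by_cases hsmall : ∑ i ∈ s, w i ≤ 2 ^ B
    · exact ⟨0, fun _ _ => c.succ_pos, fun k =>
        (sum_le_sum_of_subset (filter_subset _ s)).trans hsmall⟩
    obtain ⟨A, hAs, hA⟩ := exists_subset_sum_eq_two_pow B s w hdvd (by omega)
    have hrest : ∑ i ∈ s \ A, w i + ∑ i ∈ A, w i = ∑ i ∈ s, w i := sum_sdiff hAs
    obtain ⟨g, hg, hgk⟩ := ih (s \ A) (fun i hi => hdvd i (mem_sdiff.1 hi).1)
      (by rw [Nat.succ_mul] at hsum; omega)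
    refine ⟨fun i => if i ∈ A then 0 else g i + 1, fun i hi => ?_, fun k => ?_⟩
    · by_cases h : i ∈ A
      · simp [h]
      · simpa [h] using hg i (mem_sdiff.2 ⟨hi, h⟩)
    rcases k with _ | k
    · refine le_of_le_of_eq (sum_le_sum_of_subset fun i hi => ?_) hA
      by_contra h
      simp [h] at hi
    · refine le_trans (sum_le_sum_of_subset fun i hi => ?_) (hgk k)
      by_cases h : i ∈ A
      · simp [h] at hi
      · simp_all

theorem pos_of_sum_two_pow_sub_le {ι : Type*} {B : ℕ} {s : Finset ι} {a : ι → ℕ}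
    (hs : s.Nontrivial) (hsum : ∑ i ∈ s, 2 ^ (B - a i) ≤ 2 ^ B) {i : ι} (hi : i ∈ s) :
    0 < a i := by
  obtain ⟨j, hj, hji⟩ := hs.exists_ne i
  have hpair : 2 ^ (B - a i) + 2 ^ (B - a j) ≤ ∑ k ∈ s, 2 ^ (B - a k) := by
    classical
    rw [← sum_pair (f := fun k => 2 ^ (B - a k)) hji.symm]
    exact sum_le_sum_of_subset (insert_subset hi (singleton_subset_iff.2 hj))
  have := Nat.two_pow_pos (B - a j)
  by_contra h
  rw [Nat.eq_zero_of_not_pos h, Nat.sub_zero] at hpair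
  omega

theorem mod_two_and_div_two_mod_of_mod_two_mul {t m x e : ℕ} (h : t % (2 * m) = 2 * x + e)
    (he : e < 2) : t % 2 = e ∧ t / 2 % m = x := by
  constructor
  · rw [← Nat.mod_mul_right_mod t 2 m, h]; omega
  · rw [← Nat.mod_mul_right_div_self t 2 m, h]; omega

theorem exists_residues_of_sum_two_pow_sub_le {ι : Type*} [DecidableEq ι] (B : ℕ)
    (s : Finset ι) (a : ι → ℕ) (ha : ∀ i ∈ s, a i ≤ B)
    (hsum : ∑ i ∈ s, 2 ^ (B - a i) ≤ 2 ^ B) :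
    ∃ r : ι → ℕ, (∀ i ∈ s, r i < 2 ^ a i) ∧
      ∀ t, ∀ i ∈ s, ∀ j ∈ s, t % 2 ^ a i = r i → t % 2 ^ a j = r j → i = j := by
  induction B generalizing s a with
  | zero =>
    refine ⟨0, fun i _ => Nat.two_pow_pos _, fun t i hi j hj _ _ => ?_⟩
    by_contra hij
    have := pos_of_sum_two_pow_sub_le ⟨i, hi, j, hj, hij⟩ hsum hi
    have := ha i hi
    omega
  | succ B ih =>
    by_cases hs : s.Nontrivial
    swap
    · exact ⟨0, fun i _ => Nat.two_pow_pos _, fun t i hi j hj _ _ =>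
        by_contra fun hij => hs ⟨i, hi, j, hj, hij⟩⟩
    have hpos := fun i hi => pos_of_sum_two_pow_sub_le hs hsum (i := i) hi
    have hexp : ∀ i ∈ s, B + 1 - a i = B - (a i - 1) := fun i hi => by
      have := hpos i hi; omega
    -- split the nodes into two halves, served at even and at odd times
    obtain ⟨f, hf, hfk⟩ := exists_coloring_sum_le_two_pow 2 B s (fun i => 2 ^ (B + 1 - a i))
      (fun i hi => pow_dvd_pow 2 (by have := hpos i hi; omega)) (by rw [← pow_succ']; exact hsum)
    have hhalf := fun k => ih (s.filter (f · = k)) (fun i => a i - 1)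
      (fun i hi => by have := ha i (mem_filter.1 hi).1; omega)
      (by rw [← sum_congr rfl fun i hi => congrArg (2 ^ ·) (hexp i (mem_filter.1 hi).1)]
          exact hfk k)
    choose r hr hrdisj using hhalf
    have hpow : ∀ i ∈ s, 2 ^ a i = 2 * 2 ^ (a i - 1) := fun i hi => by
      rw [← pow_succ']; congr 1; have := hpos i hi; omega
    refine ⟨fun i => 2 * r (f i) i + f i, fun i hi => ?_, fun t i hi j hj hti htj => ?_⟩
    · have := hr (f i) i (mem_filter.2 ⟨hi, rfl⟩)
      have := hf i hi
      show 2 * r (f i) i + f i < 2 ^ a i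
      rw [hpow i hi]; omega
    rw [hpow i hi] at hti
    rw [hpow j hj] at htj
    obtain ⟨hfi, hri⟩ := mod_two_and_div_two_mod_of_mod_two_mul hti (hf i hi)
    obtain ⟨hfj, hrj⟩ := mod_two_and_div_two_mod_of_mod_two_mul htj (hf j hj)
    exact hrdisj (t % 2) (t / 2) i (mem_filter.2 ⟨hi, hfi.symm⟩) j
      (mem_filter.2 ⟨hj, hfj.symm⟩) (hfi ▸ hri) (hfj ▸ hrj)

theorem exists_residues_card_mod_two_pow_eq_le {ι : Type*} [Fintype ι] [DecidableEq ι] (c : ℕ)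
    (a : ι → ℕ) (h : ∑ i, ((2 : ℝ) ^ a i)⁻¹ ≤ c) :
    ∃ r : ι → ℕ, (∀ i, r i < 2 ^ a i) ∧
      ∀ t, (univ.filter fun i => t % 2 ^ a i = r i).card ≤ c := by
  set B := univ.sup a
  have haB : ∀ i, a i ≤ B := fun i => le_sup (mem_univ i)
  have hsum : ∑ i, 2 ^ (B - a i) ≤ c * 2 ^ B := by
    have hcast : ∀ i, ((2 ^ (B - a i) : ℕ) : ℝ) = 2 ^ B * ((2 : ℝ) ^ a i)⁻¹ := fun i => by
      rw [Nat.cast_pow, Nat.cast_ofNat, pow_sub₀ _ two_ne_zero (haB i)]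
    exact_mod_cast (show ((∑ i, 2 ^ (B - a i) : ℕ) : ℝ) ≤ c * 2 ^ B by
      rw [Nat.cast_sum, sum_congr rfl fun i _ => hcast i, ← mul_sum, mul_comm]
      gcongr)
  obtain ⟨f, hf, hfk⟩ := exists_coloring_sum_le_two_pow c B univ (fun i => 2 ^ (B - a i))
    (fun i _ => pow_dvd_pow 2 (Nat.sub_le B (a i))) hsum
  choose r hr hrdisj using fun k => exists_residues_of_sum_two_pow_sub_le B
    (univ.filter (f · = k)) a (fun i _ => haB i) (hfk k)
  refine ⟨fun i => r (f i) i, fun i => hr (f i) i (by simp), fun t => ?_⟩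
  refine (card_le_card_of_injOn f (t := range c) (fun i _ => mem_range.2 (hf i (mem_univ i)))
    fun i hi j hj hfij => ?_).trans (card_range c).le
  simp only [coe_filter, mem_univ, true_and] at hi hj
  exact hrdisj (f i) t i (by simp) j (by simp [hfij]) hi (hfij ▸ hj)

theorem two_mul_sum_range_mod_le {q : ℕ} (hq : 0 < q) (m : ℕ) :
    2 * ∑ u ∈ range m, u % q ≤ m * (q - 1) := by
  induction m using Nat.strong_induction_on with
  | _ m ih =>
    by_cases hm : m < q
    · rw [sum_congr rfl fun u hu => Nat.mod_eq_of_lt ((mem_range.1 hu).trans hm), mul_comm,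
        sum_range_id_mul_two]
      exact Nat.mul_le_mul_left m (by omega)
    obtain ⟨m, rfl⟩ := Nat.exists_eq_add_of_le (not_lt.1 hm)
    rw [sum_range_add, sum_congr rfl fun u hu => Nat.mod_eq_of_lt (mem_range.1 hu),
      sum_congr rfl fun u _ => Nat.add_mod_left q u, mul_add, mul_comm 2, sum_range_id_mul_two,
      add_mul]
    exact Nat.add_le_add_left (ih m (by omega)) _

section WaitingTime

variable {n : ℕ} {S : ℕ → Finset (Fin n)} {i : Fin n}

theorem tauC_le_sub_of_mem {t₀ t : ℕ} (ht : t₀ < t) (hi : i ∈ S t₀) : tauC n S i t ≤ t - t₀ := by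
  have : t₀ ≤ ((range t).filter (fun t' => i ∈ S t')).sup id :=
    le_sup (f := id) (mem_filter.2 ⟨mem_range.2 ht, hi⟩)
  unfold tauC
  omega

theorem tauC_succ_le_of_periodic {q r : ℕ} (hr : r < q) (hS : ∀ t, t % q = r → i ∈ S t)
    (t : ℕ) : tauC n S i (t + 1) ≤ (q - r + t) % q + 1 := by
  set u := q - r + t
  by_cases hu : u < q
  · rw [Nat.mod_eq_of_lt hu]
    exact (Nat.sub_le _ _).trans (by omega)
  have hk : q * (u / q) = q * (u / q - 1) + q := by
    rw [Nat.mul_sub_one,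
      Nat.sub_add_cancel (Nat.le_mul_of_pos_right q (Nat.div_pos (by omega) (by omega)))]
  have hdiv := Nat.mod_add_div u q
  have ht₀ : t - u % q = r + q * (u / q - 1) := by omega
  refine (tauC_le_sub_of_mem (t₀ := t - u % q) (by omega) (hS _ ?_)).trans (by omega)
  rw [ht₀, Nat.add_mul_mod_self_left, Nat.mod_eq_of_lt hr]

theorem two_mul_sum_tauC_le_of_periodic {q r : ℕ} (hr : r < q) (hS : ∀ t, t % q = r → i ∈ S t)
    (T : ℕ) : 2 * ∑ t ∈ Icc 1 T, tauC n S i t ≤ T * (q + 1) + q * q := by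
  have hshift : ∑ t ∈ Icc 1 T, tauC n S i t = ∑ u ∈ range T, tauC n S i (u + 1) := by
    rw [← Ico_add_one_right_eq_Icc, sum_Ico_eq_sum_range]
    exact sum_congr (by simp) fun u _ => by rw [add_comm]
  have hwindow : ∑ u ∈ range T, (q - r + u) % q ≤ ∑ u ∈ range (q - r + T), u % q := by
    rw [sum_range_add]
    exact Nat.le_add_left _ _
  have hmod := two_mul_sum_range_mod_le ((Nat.zero_le r).trans_lt hr) (q - r + T)
  have hle : ∑ u ∈ range T, tauC n S i (u + 1) ≤ ∑ u ∈ range (q - r + T), u % q + T := by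
    refine (sum_le_sum fun u _ => tauC_succ_le_of_periodic hr hS u).trans ?_
    rw [sum_add_distrib, sum_const, card_range, smul_eq_mul, mul_one]
    exact Nat.add_le_add_right hwindow T
  obtain ⟨q, rfl⟩ : ∃ q', q = q' + 1 := ⟨q - 1, by omega⟩
  rw [Nat.add_sub_cancel] at hmod
  have : (q + 1 - r + T) * q ≤ (q + 1 + T) * q := Nat.mul_le_mul_right q (by omega)
  rw [hshift]
  nlinarith

end WaitingTime

theorem limsup_le_of_le_add_div {f : ℕ → ℝ} {C D : ℝ} (hf₀ : ∀ T, 0 ≤ f T)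
    (hf : ∀ T ≥ 1, f T ≤ C + D / T) : Filter.limsup f Filter.atTop ≤ C := by
  have hlim : Filter.Tendsto (fun T : ℕ => C + D / T) Filter.atTop (nhds C) := by
    simpa using tendsto_const_nhds.add (tendsto_const_div_atTop_nhds_zero_nat D)
  calc Filter.limsup f Filter.atTop ≤ Filter.limsup (fun T : ℕ => C + D / T) Filter.atTop :=
        Filter.limsup_le_limsup (Filter.eventually_atTop.2 ⟨1, hf⟩)
          (Filter.isCoboundedUnder_le_of_le _ hf₀) hlim.isBoundedUnder_le
    _ = C := hlim.limsup_eq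

theorem limsup_avg_cost_le_of_periodic {n : ℕ} (S : ℕ → Finset (Fin n)) (π : Fin n → ℝ)
    (hπ : ∀ i, 0 ≤ π i) (q r : Fin n → ℕ) (hr : ∀ i, r i < q i)
    (hS : ∀ i t, t % q i = r i → i ∈ S t) :
    Filter.limsup (fun t : ℕ =>
        (1 / (t : ℝ)) * ∑ t' ∈ Icc 1 t, ∑ i, π i * (tauC n S i t' : ℝ)) Filter.atTop ≤
      ∑ i, π i * ((q i + 1) / 2) := by
  refine limsup_le_of_le_add_div (D := ∑ i, π i * (q i * q i / 2)) (fun T =>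
    mul_nonneg (by positivity) (sum_nonneg fun t _ => sum_nonneg fun i _ =>
      mul_nonneg (hπ i) (Nat.cast_nonneg _))) fun T hT => ?_
  have hT : (0 : ℝ) < T := by exact_mod_cast hT
  have hi : ∀ i, ∑ t ∈ Icc 1 T, (tauC n S i t : ℝ) ≤ T * ((q i + 1) / 2) + q i * q i / 2 := by
    intro i
    have := two_mul_sum_tauC_le_of_periodic (hr i) (hS i) T
    rw [← Nat.cast_le (α := ℝ)] at this
    push_cast at this
    linarith
  rw [sum_comm, one_div_mul_eq_div, div_le_iff₀ hT, add_mul, div_mul_cancel₀ _ hT.ne', mul_comm,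
    mul_sum, ← sum_add_distrib]
  refine sum_le_sum fun i _ => ?_
  rw [← mul_sum]
  nlinarith [mul_le_mul_of_nonneg_left (hi i) (hπ i)]

theorem exists_two_pow_mem_Ico {p : ℝ} (hp : 0 < p) :
    ∃ a : ℕ, (2 : ℝ) ^ a ∈ Set.Ico p (2 * p + 1) := by
  classical
  have hex : ∃ a : ℕ, p ≤ 2 ^ a := (pow_unbounded_of_one_lt p one_lt_two).imp fun _ => le_of_lt
  obtain ⟨a, ha, hmin⟩ : ∃ a : ℕ, p ≤ 2 ^ a ∧ ∀ b < a, ¬p ≤ 2 ^ b :=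
    ⟨Nat.find hex, Nat.find_spec hex, fun _ => Nat.find_min hex⟩
  refine ⟨a, ha, ?_⟩
  cases a with
  | zero => rw [pow_zero]; linarith
  | succ a =>
    have := hmin a a.lt_succ_self
    rw [pow_succ]; linarith

theorem sum_mul_div_sqrt {ι : Type*} (s : Finset ι) (π : ι → ℝ) (x : ℝ) :
    ∑ i ∈ s, π i * (x / √(π i)) = x * ∑ i ∈ s, √(π i) := by
  rw [mul_sum]
  refine sum_congr rfl fun i _ => ?_
  rw [mul_div_assoc', mul_comm, mul_div_assoc, Real.div_sqrt]

theorem stmt_6_general (n c : ℕ) (hc : 1 ≤ c) (π : Fin n → ℝ)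
    (hπ : ∀ i, 0 < π i) :
    ∃ S : ℕ → Finset (Fin n),
      (∀ t, (S t).card ≤ c) ∧
      Filter.limsup (fun t : ℕ =>
          (1 / (t : ℝ)) * ∑ t' ∈ Finset.Icc 1 t, ∑ i, π i * (tauC n S i t' : ℝ))
          Filter.atTop ≤
        (3 + ((c : ℝ) - 1) / c) *
          max (∑ i, π i) ((1 / (2 * (c : ℝ))) * (∑ i, Real.sqrt (π i)) ^ 2) := by
  set W := ∑ i, √(π i) with hW
  have hc₀ : (0 : ℝ) < c := by exact_mod_cast hc
  have hsqrt : ∀ i, 0 < √(π i) := fun i => Real.sqrt_pos.2 (hπ i)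
  -- `p i` is the optimal period of node `i` in the relaxation behind the lower bound
  set p : Fin n → ℝ := fun i => W / c / √(π i)
  have hp : ∀ i, 0 < p i := fun i => div_pos (div_pos ((hsqrt i).trans_le
    (single_le_sum (fun j _ => (hsqrt j).le) (mem_univ i))) hc₀) (hsqrt i)
  choose a ha using fun i => exists_two_pow_mem_Ico (hp i)
  have hdensity : ∑ i, ((2 : ℝ) ^ a i)⁻¹ ≤ c := calc
    ∑ i, ((2 : ℝ) ^ a i)⁻¹ ≤ ∑ i, (p i)⁻¹ := sum_le_sum fun i _ => inv_anti₀ (hp i) (ha i).1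
    _ = W / (W / c) := by simp only [p, inv_div, ← sum_div, ← hW]
    _ ≤ c := by
      rcases eq_or_ne W 0 with hW₀ | hW₀
      · simp [hW₀]
      · rw [div_div_cancel₀ hW₀]
  obtain ⟨r, hr, hcard⟩ := exists_residues_card_mod_two_pow_eq_le c a hdensity
  refine ⟨fun t => univ.filter fun i => t % 2 ^ a i = r i, hcard, ?_⟩
  set M := max (∑ i, π i) ((1 / (2 * (c : ℝ))) * W ^ 2)
  have hM₁ : ∑ i, π i ≤ M := le_max_left _ _
  have hM₂ : 1 / (2 * c) * W ^ 2 ≤ M := le_max_right _ _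
  calc _ ≤ ∑ i, π i * ((((2 ^ a i : ℕ) : ℝ) + 1) / 2) :=
        limsup_avg_cost_le_of_periodic _ π (fun i => (hπ i).le) (2 ^ a ·) r hr (by simp)
    _ ≤ ∑ i, π i * (p i + 1) := sum_le_sum fun i _ => by
        have := (ha i).2
        push_cast
        nlinarith [hπ i]
    _ = 2 * (1 / (2 * c) * W ^ 2) + ∑ i, π i := by
        simp only [mul_add, mul_one, sum_add_distrib, p, sum_mul_div_sqrt, ← hW]
        field_simp
    _ ≤ (3 + ((c : ℝ) - 1) / c) * M := by
        have : 0 ≤ ((c : ℝ) - 1) / c :=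
          div_nonneg (by linarith [(Nat.one_le_cast (α := ℝ)).2 hc]) hc₀.le
        nlinarith [sum_nonneg fun i (_ : i ∈ univ) => (hπ i).le]

theorem stmt_6 (n c : ℕ) (hn : 1 ≤ n) (hc : 1 ≤ c) (π : Fin n → ℝ)
    (hπ : ∀ i, 0 < π i) :
    ∃ S : ℕ → Finset (Fin n),
      (∀ t, (S t).card ≤ c) ∧
      Filter.limsup (fun t : ℕ =>
          (1 / (t : ℝ)) * ∑ t' ∈ Finset.Icc 1 t, ∑ i, π i * (tauC n S i t' : ℝ))
          Filter.atTop ≤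
        (3 + ((c : ℝ) - 1) / c) *
          max (∑ i, π i) ((1 / (2 * (c : ℝ))) * (∑ i, Real.sqrt (π i)) ^ 2) :=
  stmt_6_general n c hc π hπ
end

section
/- Let n ≥ 1, define π : Fin n → ℝ by π i = 2^{-(i+1)} for i = 0,…,n-1, set Z = ∑_{j=0}^{n-1} 2^{-(j+1)/2}, and define p : Fin n → ℝ by p i = 2^{-(i+1)/2} / Z. Then ∑_{i} (π i)/(p i) = Z², and Z² ≤ 6. -/
/-!
Writing `a j = 2^{-(j+1)/2}`, the rates are `π j = a j ^ 2` and the schedule is `p = a / Z` with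
`Z = ∑ a`, so each term of the cost is `a j ^ 2 / (a j / Z) = Z * a j`, and the cost is `Z ^ 2`.
Since `a j = (1/√2)^(j+1)`, `Z` is a partial sum of a geometric series, hence
`Z ≤ 1 / (√2 - 1) = √2 + 1` and `Z ^ 2 ≤ 3 + 2√2 ≤ 6`.
-/

open Finset

theorem sum_sq_div_div_sum {ι K : Type*} [Fintype ι] [Field K] (a : ι → K) :
    ∑ i, a i ^ 2 / (a i / ∑ j, a j) = (∑ j, a j) ^ 2 := by
  have hterm : ∀ i, a i ^ 2 / (a i / ∑ j, a j) = a i * ∑ j, a j := fun i => by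
    rcases eq_or_ne (a i) 0 with hai | hai
    · simp [hai]
    · rw [div_div_eq_mul_div, sq, mul_assoc, mul_div_assoc, mul_div_cancel_left₀ _ hai]
  rw [sum_congr rfl fun i _ => hterm i, ← sum_mul, sq]

theorem sum_fin_pow_succ_le {r : ℝ} (hr₀ : 0 ≤ r) (hr₁ : r < 1) (n : ℕ) :
    ∑ j : Fin n, r ^ ((j : ℕ) + 1) ≤ r / (1 - r) := by
  calc ∑ j : Fin n, r ^ ((j : ℕ) + 1)
      = r * ∑ j ∈ range n, r ^ j := by
        rw [Fin.sum_univ_eq_sum_range (fun j => r ^ (j + 1)), mul_sum]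
        exact sum_congr rfl fun j _ => pow_succ' r j
    _ ≤ r * (1 / (1 - r)) := by
        refine mul_le_mul_of_nonneg_left ?_ hr₀
        simpa using geom_sum_Ico_le_of_lt_one (m := 0) (n := n) hr₀ hr₁
    _ = r / (1 - r) := mul_one_div r _

theorem two_rpow_neg_succ_div_two (j : ℕ) :
    (2 : ℝ) ^ (-((j : ℝ) + 1) / 2) = (√2)⁻¹ ^ (j + 1) := by
  rw [Real.sqrt_eq_rpow, ← Real.rpow_neg zero_le_two, ← Real.rpow_natCast,
    ← Real.rpow_mul zero_le_two]
  push_cast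
  ring_nf

theorem inv_sqrt_two_pow_sq (j : ℕ) : ((√2)⁻¹ ^ (j + 1)) ^ 2 = ((1 : ℝ) / 2) ^ (j + 1) := by
  rw [← pow_mul, mul_comm, pow_mul, inv_pow, Real.sq_sqrt zero_le_two, one_div]

theorem sum_inv_sqrt_two_pow_succ_le (n : ℕ) :
    ∑ j : Fin n, (√2)⁻¹ ^ ((j : ℕ) + 1) ≤ √2 + 1 := by
  have hs : 1 < √2 := Real.one_lt_sqrt_two
  have hsq : √2 * √2 = 2 := Real.mul_self_sqrt zero_le_two
  refine (sum_fin_pow_succ_le (by positivity) (inv_lt_one_of_one_lt₀ hs) n).trans_eq ?_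
  field_simp
  rw [div_eq_iff (by linarith)]
  nlinarith

theorem stmt_12_general (n : ℕ) (π p : Fin n → ℝ) (Z : ℝ)
    (hπ : ∀ i : Fin n, π i = ((1 : ℝ) / 2) ^ ((i : ℕ) + 1))
    (hZ : Z = ∑ j : Fin n, (2 : ℝ) ^ (-(((j : ℕ) : ℝ) + 1) / 2))
    (hp : ∀ i : Fin n, p i = (2 : ℝ) ^ (-(((i : ℕ) : ℝ) + 1) / 2) / Z) :
    (∑ i, π i / p i) = Z ^ 2 ∧ Z ^ 2 ≤ 6 := by
  set a : Fin n → ℝ := fun j => (√2)⁻¹ ^ ((j : ℕ) + 1)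
  have hZa : Z = ∑ j, a j := by simp only [hZ, a, two_rpow_neg_succ_div_two]
  have hcost : ∑ i, π i / p i = ∑ i, a i ^ 2 / (a i / ∑ j, a j) := by
    simp only [hπ, hp, two_rpow_neg_succ_div_two, inv_sqrt_two_pow_sq, a, ← hZa]
  refine ⟨hcost.trans (hZa ▸ sum_sq_div_div_sum a), ?_⟩
  have hZ₀ : 0 ≤ Z := hZa ▸ sum_nonneg fun i _ => by positivity
  have hs : √2 ≤ 3 / 2 := Real.sqrt_le_iff.mpr ⟨by norm_num, by norm_num⟩
  calc Z ^ 2 ≤ (√2 + 1) ^ 2 := by gcongr; exact hZa ▸ sum_inv_sqrt_two_pow_succ_le n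
    _ = 3 + 2 * √2 := by ring_nf; rw [Real.sq_sqrt zero_le_two]; ring
    _ ≤ 6 := by linarith

theorem stmt_12 (n : ℕ) (hn : 1 ≤ n) (π p : Fin n → ℝ) (Z : ℝ)
    (hπ : ∀ i : Fin n, π i = ((1 : ℝ) / 2) ^ ((i : ℕ) + 1))
    (hZ : Z = ∑ j : Fin n, (2 : ℝ) ^ (-(((j : ℕ) : ℝ) + 1) / 2))
    (hp : ∀ i : Fin n, p i = (2 : ℝ) ^ (-(((i : ℕ) : ℝ) + 1) / 2) / Z) :
    (∑ i, π i / p i) = Z ^ 2 ∧ Z ^ 2 ≤ 6 :=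
  stmt_12_general n π p Z hπ hZ hp
end
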